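/- arXiv:2310.06439 — 7 statements merged into one kernel-verified Lean document; each statement's English description precedes it below -/
import Mathlib

section
/- Let V be an inner product space equipped with two anticommuting square-zero operators D' and D'' (i.e. D'² = 0, D''² = 0, D'D'' + D''D' = 0) whose Laplacians coincide: D'(D')* + (D')*D' = D''(D'')* + (D'')*D''. Assume V admits the Hodge decompositions V = H ⊕ im D' ⊕ im (D')* and V = H ⊕ im D'' ⊕ im (D'')* with H the common harmonic space, and that (D'')(D')* = -(D')*(D''). Then ker D' ∩ ker D'' ∩ (im D' + im D'') = im (D'D''). -/
open scoped InnerProductSpace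

/-- The abstract `D'D''`-lemma: for two anticommuting square-zero operators on an inner
product space with equal Laplacians, Hodge decompositions with common harmonic space, and
the Kähler-identity relation `D'' (D')* = -(D')* D''`, one has
`ker D' ∩ ker D'' ∩ (im D' + im D'') = im (D' D'')`. -/
theorem abstract_ddbar_lemma
    (V : Type) [NormedAddCommGroup V] [InnerProductSpace ℂ V]
    (D' D'' D'a D''a : V →ₗ[ℂ] V)
    (hD'2 : ∀ x, D' (D' x) = 0) (hD''2 : ∀ x, D'' (D'' x) = 0)
    (hanti : ∀ x, D' (D'' x) + D'' (D' x) = 0)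
    (hadj' : ∀ x y, ⟪D' x, y⟫_ℂ = ⟪x, D'a y⟫_ℂ)
    (hadj'' : ∀ x y, ⟪D'' x, y⟫_ℂ = ⟪x, D''a y⟫_ℂ)
    (hLap : ∀ x, D' (D'a x) + D'a (D' x) = D'' (D''a x) + D''a (D'' x))
    (hK : ∀ x, D'' (D'a x) = - D'a (D'' x))
    (hHodge' : ∀ v : V, ∃ h a b, (D' (D'a h) + D'a (D' h) = 0) ∧ v = h + D' a + D'a b)
    (hHodge'' : ∀ v : V, ∃ h a b, (D'' (D''a h) + D''a (D'' h) = 0) ∧ v = h + D'' a + D''a b) :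
    LinearMap.ker D' ⊓ LinearMap.ker D'' ⊓ (LinearMap.range D' ⊔ LinearMap.range D'')
      = LinearMap.range (D' ∘ₗ D'') := by
  -- reversed adjoint identities
  have hadj'r : ∀ x y : V, ⟪x, D' y⟫_ℂ = ⟪D'a x, y⟫_ℂ := by
    intro x y
    rw [← inner_conj_symm, hadj', inner_conj_symm]
  have hadj''r : ∀ x y : V, ⟪x, D'' y⟫_ℂ = ⟪D''a x, y⟫_ℂ := by
    intro x y
    rw [← inner_conj_symm, hadj'', inner_conj_symm]
  -- the other Kähler identity: D' D''a = - D''a D'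
  have hK' : ∀ y, D' (D''a y) = - D''a (D' y) := by
    intro y
    have h0 : ∀ w : V, ⟪w, D' (D''a y) + D''a (D' y)⟫_ℂ = 0 := by
      intro w
      have h1 : ⟪w, D' (D''a y)⟫_ℂ = - ⟪w, D''a (D' y)⟫_ℂ := by
        rw [hadj'r, ← hadj'', hK, inner_neg_left, ← hadj'r, hadj'']
      rw [inner_add_right, h1]
      ring
    have h2 := h0 (D' (D''a y) + D''a (D' y))
    rw [inner_self_eq_zero] at h2
    exact eq_neg_of_add_eq_zero_left h2
  -- harmonic elements are killed by both the operator and its adjoint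
  have harm : ∀ (A B : V →ₗ[ℂ] V), (∀ x y, ⟪A x, y⟫_ℂ = ⟪x, B y⟫_ℂ) →
      ∀ h : V, A (B h) + B (A h) = 0 → A h = 0 ∧ B h = 0 := by
    intro A B hAB h hh
    have h1 : ⟪A (B h) + B (A h), h⟫_ℂ = 0 := by rw [hh, inner_zero_left]
    rw [inner_add_left, hAB] at h1
    have h2 : ⟪B (A h), h⟫_ℂ = ⟪A h, A h⟫_ℂ := by
      rw [← inner_conj_symm, ← hAB, inner_conj_symm]
    rw [h2] at h1
    have h3 : (‖B h‖ : ℝ) ^ 2 + (‖A h‖ : ℝ) ^ 2 = 0 := by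
      have h4 := congrArg (RCLike.re (K := ℂ)) h1
      rw [map_add, inner_self_eq_norm_sq, inner_self_eq_norm_sq, map_zero] at h4
      exact h4
    constructor
    · have : ‖A h‖ = 0 := by nlinarith [norm_nonneg (A h), norm_nonneg (B h)]
      exact norm_eq_zero.mp this
    · have : ‖B h‖ = 0 := by nlinarith [norm_nonneg (A h), norm_nonneg (B h)]
      exact norm_eq_zero.mp this
  apply le_antisymm
  · -- hard inclusion
    rintro v ⟨⟨hv', hv''⟩, hvsum⟩
    replace hv' : D' v = 0 := hv'
    replace hv'' : D'' v = 0 := hv''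
    replace hvsum : v ∈ LinearMap.range D' ⊔ LinearMap.range D'' := hvsum
    rw [Submodule.mem_sup] at hvsum
    obtain ⟨p, hp, q, hq, hpq⟩ := hvsum
    obtain ⟨x, rfl⟩ := hp
    obtain ⟨y, rfl⟩ := hq
    obtain ⟨h1, a1, b1, hh1, hx⟩ := hHodge'' x
    obtain ⟨h2, a2, b2, hh2, hy⟩ := hHodge' y
    -- harmonic facts
    have hh1' : D' (D'a h1) + D'a (D' h1) = 0 := by rw [hLap]; exact hh1
    have hh2'' : D'' (D''a h2) + D''a (D'' h2) = 0 := by rw [← hLap]; exact hh2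
    obtain ⟨hD'h1, -⟩ := harm D' D'a hadj' h1 hh1'
    obtain ⟨hD'h2, -⟩ := harm D' D'a hadj' h2 hh2
    obtain ⟨hD''h2, -⟩ := harm D'' D''a hadj'' h2 hh2''
    -- compute D' x and D'' y
    have hD'x : D' x = D' (D'' a1) - D''a (D' b1) := by
      rw [hx, map_add, map_add, hD'h1, hK' b1]; abel
    have hD''y : D'' y = - D' (D'' a2) - D'a (D'' b2) := by
      have han : D'' (D' a2) = - D' (D'' a2) := eq_neg_of_add_eq_zero_right (hanti a2)
      rw [hy, map_add, map_add, hD''h2, han, hK b2]; abel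
    -- the error term
    set w : V := D''a (D' b1) + D'a (D'' b2) with hw
    have hv : v = D' (D'' (a1 - a2)) - w := by
      rw [← hpq, hD'x, hD''y, map_sub, map_sub, hw]; abel
    have hwker' : D' w = 0 := by
      have h := congrArg (fun t => D' t) hv
      simp only [map_sub, hD'2, hv'] at h
      simpa using h.symm
    have hwker'' : D'' w = 0 := by
      have h : D'' v = D'' (D' (D'' (a1 - a2))) - D'' w := by rw [hv, map_sub]
      have h2 : D'' (D' (D'' (a1 - a2))) = 0 := by
        have h3 := hanti (D'' (a1 - a2))
        rw [hD''2, map_zero, zero_add] at h3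
        exact h3
      rw [h2, hv''] at h
      simpa using h.symm
    have hw0 : w = 0 := by
      have e : ⟪w, D''a (D' b1) + D'a (D'' b2)⟫_ℂ = 0 := by
        rw [inner_add_right, ← hadj'', ← hadj', hwker', hwker'', inner_zero_left,
          inner_zero_left, add_zero]
      rw [← hw] at e
      exact inner_self_eq_zero.mp e
    refine ⟨a1 - a2, ?_⟩
    rw [LinearMap.comp_apply]
    rw [hv, hw0, sub_zero]
  · rintro v ⟨z, rfl⟩
    refine ⟨⟨?_, ?_⟩, ?_⟩
    · exact LinearMap.mem_ker.mpr (hD'2 (D'' z))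
    · refine LinearMap.mem_ker.mpr ?_
      have := hanti (D'' z)
      rw [hD''2, map_zero, zero_add] at this
      exact this
    · exact Submodule.mem_sup_left ⟨D'' z, rfl⟩
end

section
/- In the setting of the abstract D'D''-lemma (two anticommuting square-zero operators D', D'' on an inner product space V with equal Laplacians and Hodge decompositions), the inclusion of complexes (ker D', D'') → (V, D'' ) induces an isomorphism on cohomology. -/
open scoped InnerProductSpace

lemma harmonic_aux {V : Type} [NormedAddCommGroup V] [InnerProductSpace ℂ V]
    (A Aa : V →ₗ[ℂ] V) (hadj : ∀ x y, ⟪A x, y⟫_ℂ = ⟪x, Aa y⟫_ℂ)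
    (x : V) (hx : A (Aa x) + Aa (A x) = 0) : A x = 0 ∧ Aa x = 0 := by
  have h1 : ⟪A (Aa x) + Aa (A x), x⟫_ℂ = 0 := by rw [hx]; simp
  rw [inner_add_left] at h1
  have e1 : ⟪A (Aa x), x⟫_ℂ = ⟪Aa x, Aa x⟫_ℂ := hadj _ _
  have e2 : ⟪Aa (A x), x⟫_ℂ = ⟪A x, A x⟫_ℂ := by
    rw [← inner_conj_symm, ← hadj, inner_conj_symm]
  rw [e1, e2, inner_self_eq_norm_sq_to_K, inner_self_eq_norm_sq_to_K] at h1
  norm_cast at h1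
  replace h1 : (‖Aa x‖ ^ 2 + ‖A x‖ ^ 2 : ℝ) = 0 := by exact_mod_cast Complex.ofReal_eq_zero.mp h1
  have hA : ‖A x‖ = 0 := by nlinarith [norm_nonneg (A x), norm_nonneg (Aa x), h1]
  have hAa : ‖Aa x‖ = 0 := by nlinarith [norm_nonneg (A x), norm_nonneg (Aa x), h1]
  exact ⟨norm_eq_zero.mp hA, norm_eq_zero.mp hAa⟩

/-- In the setting of the abstract `D'D''`-lemma, the inclusion of complexes
`(ker D', D'') → (V, D'')` induces an isomorphism on cohomology. -/
theorem ker_inclusion_quasi_iso_Dbar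
    (V : Type) [NormedAddCommGroup V] [InnerProductSpace ℂ V]
    (D' D'' D'a D''a : V →ₗ[ℂ] V)
    (hD'2 : ∀ x, D' (D' x) = 0) (hD''2 : ∀ x, D'' (D'' x) = 0)
    (hanti : ∀ x, D' (D'' x) + D'' (D' x) = 0)
    (hadj' : ∀ x y, ⟪D' x, y⟫_ℂ = ⟪x, D'a y⟫_ℂ)
    (hadj'' : ∀ x y, ⟪D'' x, y⟫_ℂ = ⟪x, D''a y⟫_ℂ)
    (hLap : ∀ x, D' (D'a x) + D'a (D' x) = D'' (D''a x) + D''a (D'' x))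
    (hK : ∀ x, D'' (D'a x) = - D'a (D'' x))
    (hHodge' : ∀ v : V, ∃ h a b, (D' (D'a h) + D'a (D' h) = 0) ∧ v = h + D' a + D'a b)
    (hHodge'' : ∀ v : V, ∃ h a b, (D'' (D''a h) + D''a (D'' h) = 0) ∧ v = h + D'' a + D''a b)
    (hlemma : LinearMap.ker D' ⊓ LinearMap.ker D''
        ⊓ (LinearMap.range D' ⊔ LinearMap.range D'') = LinearMap.range (D' ∘ₗ D'')) :
    (∀ α, D'' α = 0 → ∃ γ β, D' γ = 0 ∧ D'' γ = 0 ∧ α = γ + D'' β) ∧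
    (∀ γ, D' γ = 0 → D'' γ = 0 → (∃ β, γ = D'' β) → ∃ δ, D' δ = 0 ∧ γ = D'' δ) := by
  constructor
  · intro α hα
    obtain ⟨h, a, b, hh, hdec⟩ := hHodge'' α
    obtain ⟨hD''h, hD''ah⟩ := harmonic_aux D'' D''a hadj'' h hh
    have hΔ' : D' (D'a h) + D'a (D' h) = 0 := by rw [hLap]; exact hh
    obtain ⟨hD'h, -⟩ := harmonic_aux D' D'a hadj' h hΔ'
    have h0 : D'' (D''a b) = 0 := by
      have h3 : D'' α = D'' h + D'' (D'' a) + D'' (D''a b) := by rw [hdec]; simp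
      rw [hα, hD''h, hD''2] at h3
      simpa using h3.symm
    have hb : D''a b = 0 := by
      have h2 : ⟪D'' (D''a b), b⟫_ℂ = ⟪D''a b, D''a b⟫_ℂ := hadj'' _ _
      rw [h0, inner_zero_left] at h2
      exact inner_self_eq_zero.mp h2.symm
    exact ⟨h, a, hD'h, hD''h, by rw [hdec, hb, add_zero]⟩
  · rintro γ hγ' hγ'' ⟨β, hβ⟩
    have hmem : γ ∈ LinearMap.range (D' ∘ₗ D'') := by
      rw [← hlemma]
      exact ⟨⟨hγ', hγ''⟩, Submodule.mem_sup_right ⟨β, hβ.symm⟩⟩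
    obtain ⟨η, hη⟩ := hmem
    refine ⟨-D' η, by simp [hD'2], ?_⟩
    have h4 : D'' (D' η) = - D' (D'' η) := eq_neg_of_add_eq_zero_right (hanti η)
    rw [map_neg, h4, neg_neg, ← hη]
    rfl
end

section
/- In the setting of the abstract D'D''-lemma, the inclusion of complexes (ker D', D'') → (V, D' + D'') induces an isomorphism on cohomology, where D = D' + D'' satisfies D² = 0. -/
open scoped InnerProductSpace

/-- In the setting of the abstract `D'D''`-lemma, the inclusion of complexes
`(ker D', D'') → (V, D' + D'')` (where `D = D' + D''` satisfies `D² = 0`) induces an isomorphism on cohomology. -/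
theorem ker_inclusion_quasi_iso_D
    (V : Type) [NormedAddCommGroup V] [InnerProductSpace ℂ V]
    (D' D'' D'a D''a : V →ₗ[ℂ] V)
    (hD'2 : ∀ x, D' (D' x) = 0) (hD''2 : ∀ x, D'' (D'' x) = 0)
    (hanti : ∀ x, D' (D'' x) + D'' (D' x) = 0)
    (hadj' : ∀ x y, ⟪D' x, y⟫_ℂ = ⟪x, D'a y⟫_ℂ)
    (hadj'' : ∀ x y, ⟪D'' x, y⟫_ℂ = ⟪x, D''a y⟫_ℂ)
    (hLap : ∀ x, D' (D'a x) + D'a (D' x) = D'' (D''a x) + D''a (D'' x))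
    (hK : ∀ x, D'' (D'a x) = - D'a (D'' x))
    (hHodge' : ∀ v : V, ∃ h a b, (D' (D'a h) + D'a (D' h) = 0) ∧ v = h + D' a + D'a b)
    (hHodge'' : ∀ v : V, ∃ h a b, (D'' (D''a h) + D''a (D'' h) = 0) ∧ v = h + D'' a + D''a b)
    (hlemma : LinearMap.ker D' ⊓ LinearMap.ker D''
        ⊓ (LinearMap.range D' ⊔ LinearMap.range D'') = LinearMap.range (D' ∘ₗ D'')) :
    (∀ α, D' α + D'' α = 0 → ∃ γ β, D' γ = 0 ∧ D'' γ = 0 ∧ α = γ + (D' β + D'' β)) ∧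
    (∀ γ, D' γ = 0 → D'' γ = 0 → (∃ β, γ = D' β + D'' β) → ∃ δ, D' δ = 0 ∧ γ = D'' δ) := by
  constructor
  · intro α hα
    -- D'α lies in ker D' ⊓ ker D'' ⊓ (range D' ⊔ range D'')
    have hD''α : D'' α = -D' α := eq_neg_of_add_eq_zero_right hα
    have hmem : D' α ∈ LinearMap.ker D' ⊓ LinearMap.ker D''
        ⊓ (LinearMap.range D' ⊔ LinearMap.range D'') := by
      refine ⟨⟨?_, ?_⟩, Submodule.mem_sup_left ⟨α, rfl⟩⟩
      · exact hD'2 α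
      · have h1 := hanti α
        rw [hD''α, map_neg, hD'2, neg_zero, zero_add] at h1
        exact h1
    rw [hlemma] at hmem
    obtain ⟨σ, hσ⟩ := hmem
    simp only [LinearMap.comp_apply] at hσ
    refine ⟨α - (D' σ + D'' σ), σ, ?_, ?_, by abel⟩
    · simp only [map_sub, map_add]
      rw [hσ, hD'2 σ]
      abel
    · simp only [map_sub, map_add]
      rw [hD''2 σ]
      have h1 := hanti σ
      have h2 : D'' (D' σ) = -D' (D'' σ) := eq_neg_of_add_eq_zero_right h1
      rw [h2, hσ, hD''α]
      abel
  · intro γ h1 h2 ⟨β, hβ⟩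
    have hmem : γ ∈ LinearMap.ker D' ⊓ LinearMap.ker D''
        ⊓ (LinearMap.range D' ⊔ LinearMap.range D'') := by
      refine ⟨⟨h1, h2⟩, ?_⟩
      rw [hβ]
      exact Submodule.add_mem _ (Submodule.mem_sup_left ⟨β, rfl⟩)
        (Submodule.mem_sup_right ⟨β, rfl⟩)
    rw [hlemma] at hmem
    obtain ⟨σ, hσ⟩ := hmem
    simp only [LinearMap.comp_apply] at hσ
    refine ⟨-D' σ, by rw [map_neg, hD'2 σ, neg_zero], ?_⟩
    rw [map_neg, ← hσ]
    exact eq_neg_of_add_eq_zero_left (hanti σ)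
end

section
/- In the setting of the abstract D'D''-lemma, the projection map from the complex (ker D', D'') to its D'-cohomology H_{D'} = ker D' / im D', equipped with the zero differential, is a well-defined chain map (i.e. D''(ker D') ⊂ im D' within ker D') and induces an isomorphism on cohomology. -/
open scoped InnerProductSpace

/-- If `x` is harmonic for the Laplacian of `D` (with adjoint `Da`), then `D x = 0` and
`Da x = 0`. -/
lemma harmonic_closed_coclosed
    (V : Type) [NormedAddCommGroup V] [InnerProductSpace ℂ V]
    (D Da : V →ₗ[ℂ] V)
    (hadj : ∀ x y, ⟪D x, y⟫_ℂ = ⟪x, Da y⟫_ℂ)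
    (h : V) (hh : D (Da h) + Da (D h) = 0) : D h = 0 ∧ Da h = 0 := by
  have key : ⟪D (Da h) + Da (D h), h⟫_ℂ = 0 := by rw [hh]; simp
  rw [inner_add_left] at key
  have h1 : ⟪D (Da h), h⟫_ℂ = ⟪Da h, Da h⟫_ℂ := hadj (Da h) h
  have h2 : ⟪Da (D h), h⟫_ℂ = ⟪D h, D h⟫_ℂ := by
    have := hadj h (D h)
    calc ⟪Da (D h), h⟫_ℂ = starRingEnd ℂ ⟪h, Da (D h)⟫_ℂ := (inner_conj_symm _ _).symm
      _ = starRingEnd ℂ ⟪D h, D h⟫_ℂ := by rw [← this]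
      _ = ⟪D h, D h⟫_ℂ := inner_conj_symm _ _
  rw [h1, h2] at key
  rw [inner_self_eq_norm_sq_to_K, inner_self_eq_norm_sq_to_K] at key
  have key' : (‖Da h‖ ^ 2 : ℝ) + ‖D h‖ ^ 2 = 0 := by
    have := congrArg Complex.re key
    simpa [← Complex.ofReal_pow] using this
  have hn1 : (‖Da h‖ ^ 2 : ℝ) = 0 ∧ (‖D h‖ ^ 2 : ℝ) = 0 := by
    constructor <;> nlinarith [sq_nonneg ‖Da h‖, sq_nonneg ‖D h‖]
  constructor
  · have := hn1.2
    rwa [pow_eq_zero_iff (by norm_num), norm_eq_zero] at this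
  · have := hn1.1
    rwa [pow_eq_zero_iff (by norm_num), norm_eq_zero] at this

/-- In the setting of the abstract `D'D''`-lemma, the projection from the complex
`(ker D', D'')` to its `D'`-cohomology `H_{D'} = ker D' / im D'` with zero differential is a
well-defined chain map (`D''(ker D') ⊆ im D'`) and induces an isomorphism on cohomology. -/
theorem formality_projection_quasi_iso
    (V : Type) [NormedAddCommGroup V] [InnerProductSpace ℂ V]
    (D' D'' D'a D''a : V →ₗ[ℂ] V)
    (hD'2 : ∀ x, D' (D' x) = 0) (hD''2 : ∀ x, D'' (D'' x) = 0)
    (hanti : ∀ x, D' (D'' x) + D'' (D' x) = 0)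
    (hadj' : ∀ x y, ⟪D' x, y⟫_ℂ = ⟪x, D'a y⟫_ℂ)
    (hadj'' : ∀ x y, ⟪D'' x, y⟫_ℂ = ⟪x, D''a y⟫_ℂ)
    (hLap : ∀ x, D' (D'a x) + D'a (D' x) = D'' (D''a x) + D''a (D'' x))
    (hK : ∀ x, D'' (D'a x) = - D'a (D'' x))
    (hHodge' : ∀ v : V, ∃ h a b, (D' (D'a h) + D'a (D' h) = 0) ∧ v = h + D' a + D'a b)
    (hHodge'' : ∀ v : V, ∃ h a b, (D'' (D''a h) + D''a (D'' h) = 0) ∧ v = h + D'' a + D''a b)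
    (hlemma : LinearMap.ker D' ⊓ LinearMap.ker D''
        ⊓ (LinearMap.range D' ⊔ LinearMap.range D'') = LinearMap.range (D' ∘ₗ D'')) :
    -- the projection is a chain map: `D''` maps `ker D'` into `im D'`
    (∀ γ, D' γ = 0 → D'' γ ∈ LinearMap.range D') ∧
    -- surjectivity on cohomology: every `D'`-class has a `D''`-closed representative in `ker D'`
    (∀ a, D' a = 0 → ∃ b c, D' b = 0 ∧ D'' b = 0 ∧ a = b + D' c) ∧
    -- injectivity on cohomology
    (∀ b, D' b = 0 → D'' b = 0 → b ∈ LinearMap.range D' →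
      ∃ e, D' e = 0 ∧ b = D'' e) := by
  refine ⟨?_, ?_, ?_⟩
  · -- chain map
    intro γ hγ
    have hmem : D'' γ ∈ LinearMap.ker D' ⊓ LinearMap.ker D''
        ⊓ (LinearMap.range D' ⊔ LinearMap.range D'') := by
      refine ⟨⟨?_, ?_⟩, ?_⟩
      · have := hanti γ
        rw [hγ, map_zero, add_zero] at this
        exact this
      · exact hD''2 γ
      · exact Submodule.mem_sup_right ⟨γ, rfl⟩
    rw [hlemma] at hmem
    obtain ⟨x, hx⟩ := hmem
    exact ⟨D'' x, hx⟩
  · -- surjectivity on cohomology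
    intro a ha
    obtain ⟨h, c, d, hharm, hdec⟩ := hHodge' a
    obtain ⟨hDh, hDah⟩ := harmonic_closed_coclosed V D' D'a hadj' h hharm
    have hharm'' : D'' (D''a h) + D''a (D'' h) = 0 := by rw [← hLap]; exact hharm
    obtain ⟨hD''h, _⟩ := harmonic_closed_coclosed V D'' D''a hadj'' h hharm''
    -- D' (D'a d) = 0
    have hDDad : D' (D'a d) = 0 := by
      have := congrArg D' hdec
      rw [ha, map_add, map_add, hDh, hD'2, zero_add, zero_add] at this
      exact this.symm
    -- D'a d = 0
    have hDad : D'a d = 0 := by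
      have hzero : ⟪D'a d, D'a d⟫_ℂ = 0 := by
        have := hadj' (D'a d) d
        rw [hDDad] at this
        simpa using this.symm
      exact inner_self_eq_zero.mp hzero
    refine ⟨h, c, hDh, hD''h, ?_⟩
    rw [hdec, hDad, add_zero]
  · -- injectivity on cohomology
    intro b hb' hb'' hbr
    have hmem : b ∈ LinearMap.ker D' ⊓ LinearMap.ker D''
        ⊓ (LinearMap.range D' ⊔ LinearMap.range D'') :=
      ⟨⟨hb', hb''⟩, Submodule.mem_sup_left hbr⟩
    rw [hlemma] at hmem
    obtain ⟨x, hx⟩ := hmem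
    refine ⟨-(D' x), by rw [map_neg, hD'2, neg_zero], ?_⟩
    have := hanti x
    rw [map_neg]
    rw [eq_neg_of_add_eq_zero_right this]
    simp only [neg_neg]
    exact hx.symm
end

section
/- Let V be a graded vector space with two anticommuting square-zero degree +1 operators D' and D'' satisfying the D'D''-lemma: ker D' ∩ ker D'' ∩ (im D' + im D'') = im D'D''. Then every class in the cohomology of (V, D'+D'') has a representative lying in ker D' ∩ ker D''. -/
open scoped InnerProductSpace

/-- Surjectivity part of formality: under the `D'D''`-lemma (together with the Hodge
decomposition hypotheses), every class in the cohomology of `(V, D' + D'')` has a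
representative lying in `ker D' ∩ ker D''`. -/
theorem ddbar_harmonic_representative
    (V : Type) [NormedAddCommGroup V] [InnerProductSpace ℂ V]
    (D' D'' D'a D''a : V →ₗ[ℂ] V)
    (hD'2 : ∀ x, D' (D' x) = 0) (hD''2 : ∀ x, D'' (D'' x) = 0)
    (hanti : ∀ x, D' (D'' x) + D'' (D' x) = 0)
    (hadj' : ∀ x y, ⟪D' x, y⟫_ℂ = ⟪x, D'a y⟫_ℂ)
    (hadj'' : ∀ x y, ⟪D'' x, y⟫_ℂ = ⟪x, D''a y⟫_ℂ)
    (hLap : ∀ x, D' (D'a x) + D'a (D' x) = D'' (D''a x) + D''a (D'' x))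
    (hK : ∀ x, D'' (D'a x) = - D'a (D'' x))
    (hHodge' : ∀ v : V, ∃ h a b, (D' (D'a h) + D'a (D' h) = 0) ∧ v = h + D' a + D'a b)
    (hHodge'' : ∀ v : V, ∃ h a b, (D'' (D''a h) + D''a (D'' h) = 0) ∧ v = h + D'' a + D''a b)
    (hlemma : LinearMap.ker D' ⊓ LinearMap.ker D''
        ⊓ (LinearMap.range D' ⊔ LinearMap.range D'') = LinearMap.range (D' ∘ₗ D'')) :
    ∀ α, D' α + D'' α = 0 →
      ∃ β γ, D' β = 0 ∧ D'' β = 0 ∧ α = β + (D' γ + D'' γ) := by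
  intro α hα
  have hDa : D'' α = -D' α := eq_neg_of_add_eq_zero_right hα
  have hx : D' α ∈ LinearMap.ker D' ⊓ LinearMap.ker D''
      ⊓ (LinearMap.range D' ⊔ LinearMap.range D'') := by
    refine ⟨⟨?_, ?_⟩, Submodule.mem_sup_left ⟨α, rfl⟩⟩
    · exact hD'2 α
    · show D'' (D' α) = 0
      have h1 := hanti α
      have h2 : D' (D'' α) = 0 := by rw [hDa, map_neg, hD'2, neg_zero]
      rw [h2, zero_add] at h1
      exact h1
  rw [hlemma] at hx
  obtain ⟨c, hc⟩ := hx
  simp only [LinearMap.comp_apply] at hc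
  refine ⟨α - (D' c + D'' c), c, ?_, ?_, by abel⟩
  · simp only [map_sub, map_add, hD'2, hc]
    abel
  · have h1 : D'' (D' c) = -(D' α) := by
      rw [← hc]; exact eq_neg_of_add_eq_zero_right (hanti c)
    simp only [map_sub, map_add, hD''2, hDa, h1]
    abel
end

section
/- Let V be a graded vector space with anticommuting square-zero degree +1 operators D', D'' satisfying the D'D''-lemma. If α ∈ ker D' ∩ ker D'' is exact for D = D' + D'' (i.e. α = Dβ for some β), then α = D''γ for some γ ∈ ker D'. -/
/-- Injectivity part of formality: under the `D'D''`-lemma, if `α ∈ ker D' ∩ ker D''` is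
exact for `D = D' + D''`, then `α = D''γ` for some `γ ∈ ker D'`. -/
theorem ddbar_exact_implies_Dbar_exact_in_ker
    (K V : Type) [Field K] [AddCommGroup V] [Module K V]
    (D' D'' : V →ₗ[K] V)
    (hD'2 : ∀ x, D' (D' x) = 0) (hD''2 : ∀ x, D'' (D'' x) = 0)
    (hanti : ∀ x, D' (D'' x) + D'' (D' x) = 0)
    (hlemma : LinearMap.ker D' ⊓ LinearMap.ker D''
        ⊓ (LinearMap.range D' ⊔ LinearMap.range D'') = LinearMap.range (D' ∘ₗ D'')) :
    ∀ α, D' α = 0 → D'' α = 0 → (∃ β, α = D' β + D'' β) →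
      ∃ γ, D' γ = 0 ∧ α = D'' γ := by
  intro α h1 h2 ⟨β, hβ⟩
  have hmem : α ∈ LinearMap.range (D' ∘ₗ D'') := by
    rw [← hlemma]
    refine ⟨⟨h1, h2⟩, ?_⟩
    rw [hβ]
    exact Submodule.add_mem _ (Submodule.mem_sup_left ⟨β, rfl⟩)
      (Submodule.mem_sup_right ⟨β, rfl⟩)
  obtain ⟨σ, hσ⟩ := hmem
  refine ⟨-D' σ, by simp [hD'2], ?_⟩
  have := hanti σ
  simp only [LinearMap.coe_comp, Function.comp_apply] at hσ
  rw [map_neg]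
  rw [← hσ]; rw [eq_comm, neg_eq_iff_add_eq_zero, add_comm]; exact this
end

section
/- Let D' and D'' be degree +1 operators on a graded vector space with D'² = 0, D''² = 0 and D'D'' + D''D' = 0, and suppose the Kähler-identity relation D''(D')* = -(D')*D'' holds for the adjoint (D')*. Then for any β, writing its Hodge decomposition with respect to D' as β = β₀ + D'β₁ + (D')*β₂ with β₀ harmonic for both Laplacians (Δ' = Δ''), one has D''β = D''D'β₁ - (D')*D''β₂; moreover if D''β ∈ ker D' then (D')*D''β₂ = 0, so D''β = D''D'β₁. -/
open scoped InnerProductSpace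

/-- Computational core of the `D'D''`-lemma: given the Hodge decomposition
`β = β₀ + D'β₁ + (D')*β₂` with `β₀` harmonic (for the common Laplacian `Δ' = Δ''`), one has
`D''β = D''D'β₁ - (D')*D''β₂`; and if moreover `D''β ∈ ker D'`, then `(D')*D''β₂ = 0`, so
`D''β = D''D'β₁`. -/
theorem ddbar_lemma_computational_core
    (V : Type) [NormedAddCommGroup V] [InnerProductSpace ℂ V]
    (D' D'' D'a D''a : V →ₗ[ℂ] V)
    (hD'2 : ∀ x, D' (D' x) = 0) (hD''2 : ∀ x, D'' (D'' x) = 0)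
    (hanti : ∀ x, D' (D'' x) + D'' (D' x) = 0)
    (hadj' : ∀ x y, ⟪D' x, y⟫_ℂ = ⟪x, D'a y⟫_ℂ)
    (hadj'' : ∀ x y, ⟪D'' x, y⟫_ℂ = ⟪x, D''a y⟫_ℂ)
    (hLap : ∀ x, D' (D'a x) + D'a (D' x) = D'' (D''a x) + D''a (D'' x))
    (hK : ∀ x, D'' (D'a x) = - D'a (D'' x))
    (β β₀ β₁ β₂ : V)
    (hdecomp : β = β₀ + D' β₁ + D'a β₂)
    (hharm : D' (D'a β₀) + D'a (D' β₀) = 0) :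
    D'' β = D'' (D' β₁) - D'a (D'' β₂) ∧
    (D' (D'' β) = 0 → D'a (D'' β₂) = 0 ∧ D'' β = D'' (D' β₁)) := by
  -- β₀ is Δ''-harmonic
  have hΔ'' : D'' (D''a β₀) + D''a (D'' β₀) = 0 := by rw [← hLap]; exact hharm
  have hsum : ⟪β₀, D'' (D''a β₀)⟫_ℂ + ⟪β₀, D''a (D'' β₀)⟫_ℂ = 0 := by
    rw [← inner_add_right, hΔ'', inner_zero_right]
  have h1 : ⟪β₀, D''a (D'' β₀)⟫_ℂ = ⟪D'' β₀, D'' β₀⟫_ℂ := (hadj'' β₀ (D'' β₀)).symm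
  have h2 : ⟪β₀, D'' (D''a β₀)⟫_ℂ = ⟪D''a β₀, D''a β₀⟫_ℂ := by
    rw [← inner_conj_symm, hadj'' (D''a β₀) β₀, inner_conj_symm]
  have hz : ⟪D''a β₀, D''a β₀⟫_ℂ + ⟪D'' β₀, D'' β₀⟫_ℂ = 0 := by
    rw [← h1, ← h2]; exact hsum
  have hDβ₀ : D'' β₀ = 0 := by
    have ha := inner_self_nonneg (𝕜 := ℂ) (x := D''a β₀)
    have hb := inner_self_nonneg (𝕜 := ℂ) (x := D'' β₀)
    simp only [RCLike.re_to_complex] at ha hb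
    have hre : (⟪D''a β₀, D''a β₀⟫_ℂ).re + (⟪D'' β₀, D'' β₀⟫_ℂ).re = 0 := by
      have := congrArg Complex.re hz; simpa using this
    have hb0 : (⟪D'' β₀, D'' β₀⟫_ℂ).re = 0 := by linarith
    have : ⟪D'' β₀, D'' β₀⟫_ℂ = 0 := by
      have him : (⟪D'' β₀, D'' β₀⟫_ℂ).im = 0 := by
        have := inner_self_im (𝕜 := ℂ) (D'' β₀)
        simp only [RCLike.im_to_complex] at this
        exact this
      exact Complex.ext hb0 him
    exact inner_self_eq_zero.mp this
  -- main formula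
  have hmain : D'' β = D'' (D' β₁) - D'a (D'' β₂) := by
    rw [hdecomp]
    simp [map_add, hDβ₀, hK β₂, sub_eq_add_neg]
  refine ⟨hmain, fun h => ?_⟩
  have hDD'β₁ : D' (D'' (D' β₁)) = 0 := by
    have h0 := hanti (D' β₁)
    rw [hD'2, map_zero, add_zero] at h0
    exact h0
  have hz2 : D' (D'a (D'' β₂)) = 0 := by
    have : D' (D'' β) = D' (D'' (D' β₁)) - D' (D'a (D'' β₂)) := by
      rw [hmain, map_sub]
    rw [h, hDD'β₁] at this
    have := this.symm
    simpa using this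
  have hinner : ⟪D'a (D'' β₂), D'a (D'' β₂)⟫_ℂ = 0 := by
    rw [← hadj' (D'a (D'' β₂)) (D'' β₂), hz2, inner_zero_left]
  have hzero : D'a (D'' β₂) = 0 := inner_self_eq_zero.mp hinner
  exact ⟨hzero, by rw [hmain, hzero, sub_zero]⟩
end
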